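/- arXiv:2005.03911 — 3 statements merged into one kernel-verified Lean document; each statement's English description precedes it below -/
import Mathlib

section
/- Let s > 1, a, b, σ ≥ 1 be real numbers and v ∈ ℝ. Then there is a constant C depending only on s such that ∫_ℝ (a + |σ⁻¹u + v|)^(−s) (b + |u|)^(−s) du ≤ C [ (a + |v|)^(−s) b^(−s+1) + a^(−s+1) (b + |v|)^(−s+1) ]. -/
open MeasureTheory Set

private lemma aux_Ioi (s c : ℝ) (hs : 1 < s) (hc : 0 < c) :
    IntegrableOn (fun x : ℝ => (c + x) ^ (-s)) (Ioi (0:ℝ)) ∧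
    ∫ x in Ioi (0:ℝ), (c + x) ^ (-s) = c ^ (1 - s) / (s - 1) := by
  have hmp := measurePreserving_add_right (volume : Measure ℝ) c
  have hemb := (Homeomorph.addRight c).measurableEmbedding
  have hpre : (· + c) ⁻¹' (Ioi c) = Ioi (0:ℝ) := by
    ext x; simp
  have hfun : ((fun x : ℝ => x ^ (-s)) ∘ (· + c)) = fun x : ℝ => (c + x) ^ (-s) := by
    ext x; simp [Function.comp, add_comm]
  have hInt := (hmp.integrableOn_comp_preimage hemb
      (f := fun x : ℝ => x ^ (-s)) (s := Ioi c)).mpr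
      (integrableOn_Ioi_rpow_of_lt (by linarith) hc)
  rw [hpre, hfun] at hInt
  refine ⟨hInt, ?_⟩
  have hEq := hmp.setIntegral_preimage_emb hemb (fun x : ℝ => x ^ (-s)) (Ioi c)
  rw [hpre] at hEq
  have h2 : ∫ x in Ioi (0:ℝ), (c + x) ^ (-s) = ∫ x in Ioi c, x ^ (-s) := by
    rw [← hEq]; congr 1; ext x; rw [add_comm]
  rw [h2, integral_Ioi_rpow_of_lt (by linarith) hc]
  have h1s : (1:ℝ) - s ≠ 0 := by intro h; linarith
  rw [show -s + 1 = 1 - s by ring]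
  have h2s : s - 1 ≠ 0 := by linarith
  field_simp
  ring

private lemma aux_full (s c : ℝ) (hs : 1 < s) (hc : 0 < c) :
    Integrable (fun u : ℝ => (c + |u|) ^ (-s)) ∧
    ∫ u : ℝ, (c + |u|) ^ (-s) = 2 * (c ^ (1 - s) / (s - 1)) := by
  obtain ⟨hint, hval⟩ := aux_Ioi s c hs hc
  have hIoi : IntegrableOn (fun u : ℝ => (c + |u|) ^ (-s)) (Ioi 0) :=
    hint.congr_fun (fun x hx => by rw [abs_of_pos hx]) measurableSet_Ioi
  have hIci : IntegrableOn (fun u : ℝ => (c + |u|) ^ (-s)) (Ici 0) := by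
    rw [integrableOn_Ici_iff_integrableOn_Ioi]; exact hIoi
  have hIio : IntegrableOn (fun u : ℝ => (c + |u|) ^ (-s)) (Iio 0) := by
    rw [← (Measure.measurePreserving_neg (volume : Measure ℝ)).integrableOn_comp_preimage
        (Homeomorph.neg ℝ).measurableEmbedding]
    simp only [Function.comp_def, neg_preimage, neg_Iio, abs_neg, neg_zero]
    exact hIoi
  have hI : Integrable (fun u : ℝ => (c + |u|) ^ (-s)) := by
    rw [← integrableOn_univ, ← Iio_union_Ici (a := (0:ℝ)), integrableOn_union]
    exact ⟨hIio, hIci⟩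
  refine ⟨hI, ?_⟩
  rw [integral_comp_abs (f := fun x : ℝ => (c + x) ^ (-s)), hval]

private lemma double_bound {x y t : ℝ} (hx : 0 < x) (hy : 0 < y) (hxy : y ≤ 2 * x)
    (ht : 0 ≤ t) : x ^ (-t) ≤ 2 ^ t * y ^ (-t) := by
  have h1 : x ^ (-t) ≤ (y / 2) ^ (-t) :=
    Real.rpow_le_rpow_of_nonpos (by linarith) (by linarith) (neg_nonpos.mpr ht)
  have h2 : (y / 2) ^ (-t) = 2 ^ t * y ^ (-t) := by
    rw [Real.div_rpow hy.le (by norm_num : (0:ℝ) ≤ 2),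
      Real.rpow_neg (by norm_num : (0:ℝ) ≤ 2) t, div_eq_mul_inv, inv_inv, mul_comm]
  rw [h2] at h1
  exact h1

private lemma final_arith {s1 c1 as p q X Y B1 A B2 : ℝ} (hs1 : 0 < s1)
    (hp0 : 0 < p) (hp1 : 1 ≤ p) (hpq : p = 2 * q)
    (h1 : c1 ≤ p * X) (h3 : B2 ≤ q * Y) (h4 : as ≤ A)
    (hXn : 0 ≤ X) (hYn : 0 ≤ Y) (hB1n : 0 ≤ B1) (hAn : 0 ≤ A) (hB2n : 0 ≤ B2)
    (hasn : 0 ≤ as) :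
    c1 * (2 * (B1 / s1)) + (p * as) * (2 * (B2 / s1)) ≤
      (2 * p * p) / s1 * (X * B1 + A * Y) := by
  rw [show c1 * (2 * (B1 / s1)) + (p * as) * (2 * (B2 / s1))
      = (2 * (c1 * B1) + (p * as) * (2 * B2)) / s1 by ring,
    show (2 * p * p) / s1 * (X * B1 + A * Y) = (2 * p * p * (X * B1 + A * Y)) / s1 by ring]
  refine (div_le_div_iff_of_pos_right hs1).mpr ?_
  have t1 : c1 * B1 ≤ (p * X) * B1 := mul_le_mul_of_nonneg_right h1 hB1n
  have h3' : 2 * B2 ≤ p * Y := by rw [hpq]; nlinarith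
  have t4 : (p * as) * (2 * B2) ≤ (p * A) * (p * Y) :=
    mul_le_mul (mul_le_mul_of_nonneg_left h4 hp0.le) h3' (by linarith)
      (mul_nonneg hp0.le hAn)
  nlinarith [mul_nonneg (mul_nonneg (mul_nonneg hp0.le hXn) hB1n) (sub_nonneg.mpr hp1),
    mul_nonneg (mul_nonneg (mul_nonneg hp0.le hp0.le) hAn) hYn]

theorem stmt_0 (s : ℝ) (hs : 1 < s) :
    ∃ C > 0, ∀ a b σ v : ℝ, 1 ≤ a → 1 ≤ b → 1 ≤ σ →
      ∫ u : ℝ, (a + |σ⁻¹ * u + v|) ^ (-s) * (b + |u|) ^ (-s) ≤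
        C * ((a + |v|) ^ (-s) * b ^ (-s + 1) + a ^ (-s + 1) * (b + |v|) ^ (-s + 1)) := by
  have hs1 : (0:ℝ) < s - 1 := by linarith
  refine ⟨2 ^ (2*s+1) / (s-1), div_pos (Real.rpow_pos_of_pos two_pos _) hs1, ?_⟩
  intro a b σ v ha hb hσ
  have ha0 : (0:ℝ) < a := by linarith
  have hb0 : (0:ℝ) < b := by linarith
  have hv0 : (0:ℝ) ≤ |v| := abs_nonneg v
  set R : ℝ := |v| / 2 with hR
  have hR0 : 0 ≤ R := by positivity
  obtain ⟨hint1, hval1⟩ := aux_full s b hs hb0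
  obtain ⟨hint2, hval2⟩ := aux_full s (b + R) hs (by linarith)
  -- pointwise bound
  have hpt : ∀ u : ℝ, (a + |σ⁻¹ * u + v|) ^ (-s) * (b + |u|) ^ (-s) ≤
      (a + R) ^ (-s) * (b + |u|) ^ (-s) + 2 ^ s * a ^ (-s) * (b + R + |u|) ^ (-s) := by
    intro u
    have hu0 : (0:ℝ) ≤ |u| := abs_nonneg u
    have hbu : (0:ℝ) < b + |u| := by linarith
    have hbru : (0:ℝ) < b + R + |u| := by linarith
    have hc2n : 0 ≤ 2 ^ s * a ^ (-s) :=
      mul_nonneg (Real.rpow_nonneg (by norm_num) _) (Real.rpow_nonneg ha0.le _)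
    rcases le_or_gt R |σ⁻¹ * u + v| with h | h
    · have h1 : (a + |σ⁻¹ * u + v|) ^ (-s) ≤ (a + R) ^ (-s) :=
        Real.rpow_le_rpow_of_nonpos (by linarith) (by linarith) (by linarith)
      have h2 : (a + |σ⁻¹ * u + v|) ^ (-s) * (b + |u|) ^ (-s) ≤
          (a + R) ^ (-s) * (b + |u|) ^ (-s) :=
        mul_le_mul_of_nonneg_right h1 (Real.rpow_nonneg hbu.le _)
      have h3 : 0 ≤ 2 ^ s * a ^ (-s) * (b + R + |u|) ^ (-s) :=
        mul_nonneg hc2n (Real.rpow_nonneg hbru.le _)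
      linarith
    · have hσ0 : (0:ℝ) < σ := by linarith
      have hinv : |σ⁻¹ * u| = σ⁻¹ * |u| := by
        rw [abs_mul, abs_of_pos (inv_pos.mpr hσ0)]
      have h5 : |v| ≤ |σ⁻¹ * u + v| + |σ⁻¹ * u| := by
        calc |v| = |(σ⁻¹ * u + v) + -(σ⁻¹ * u)| := by congr 1; ring
          _ ≤ |σ⁻¹ * u + v| + |-(σ⁻¹ * u)| := abs_add_le _ _
          _ = |σ⁻¹ * u + v| + |σ⁻¹ * u| := by rw [abs_neg]
      have h6 : R ≤ σ⁻¹ * |u| := by rw [← hinv]; rw [hR] at h ⊢; linarith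
      have h7 : σ⁻¹ * |u| ≤ |u| := by
        have hσ1 : σ⁻¹ ≤ 1 := inv_le_one_of_one_le₀ hσ
        nlinarith
      have hu : R ≤ |u| := le_trans h6 h7
      have hA : (a + |σ⁻¹ * u + v|) ^ (-s) ≤ a ^ (-s) :=
        Real.rpow_le_rpow_of_nonpos ha0
          (by have := abs_nonneg (σ⁻¹ * u + v); linarith) (by linarith)
      have hB : (b + |u|) ^ (-s) ≤ 2 ^ s * (b + R + |u|) ^ (-s) :=
        double_bound hbu hbru (by linarith) (by linarith)
      have key : (a + |σ⁻¹ * u + v|) ^ (-s) * (b + |u|) ^ (-s) ≤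
          2 ^ s * a ^ (-s) * (b + R + |u|) ^ (-s) := by
        calc (a + |σ⁻¹ * u + v|) ^ (-s) * (b + |u|) ^ (-s)
            ≤ a ^ (-s) * (2 ^ s * (b + R + |u|) ^ (-s)) :=
              mul_le_mul hA hB (Real.rpow_nonneg hbu.le _) (Real.rpow_nonneg ha0.le _)
          _ = 2 ^ s * a ^ (-s) * (b + R + |u|) ^ (-s) := by ring
      have h2 : 0 ≤ (a + R) ^ (-s) * (b + |u|) ^ (-s) :=
        mul_nonneg (Real.rpow_nonneg (by linarith) _) (Real.rpow_nonneg hbu.le _)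
      linarith
  have hGint : Integrable (fun u : ℝ =>
      (a + R) ^ (-s) * (b + |u|) ^ (-s) + 2 ^ s * a ^ (-s) * (b + R + |u|) ^ (-s)) :=
    (hint1.const_mul _).add (hint2.const_mul _)
  have step1 : ∫ u : ℝ, (a + |σ⁻¹ * u + v|) ^ (-s) * (b + |u|) ^ (-s) ≤
      ∫ u : ℝ, ((a + R) ^ (-s) * (b + |u|) ^ (-s) +
        2 ^ s * a ^ (-s) * (b + R + |u|) ^ (-s)) :=
    integral_mono_of_nonneg (Filter.Eventually.of_forall fun u => by positivity) hGint
      (Filter.Eventually.of_forall hpt)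
  have step2 : ∫ u : ℝ, ((a + R) ^ (-s) * (b + |u|) ^ (-s) +
        2 ^ s * a ^ (-s) * (b + R + |u|) ^ (-s))
      = (a + R) ^ (-s) * (2 * (b ^ (1-s) / (s-1))) +
        (2 ^ s * a ^ (-s)) * (2 * ((b + R) ^ (1-s) / (s-1))) := by
    rw [integral_add (hint1.const_mul _) (hint2.const_mul _),
      integral_const_mul, integral_const_mul, hval1, hval2]
  -- auxiliary facts for the final arithmetic
  have hp0 : (0:ℝ) < 2 ^ s := Real.rpow_pos_of_pos two_pos s
  have hp1 : (1:ℝ) ≤ 2 ^ s := by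
    calc (1:ℝ) = 2 ^ (0:ℝ) := by rw [Real.rpow_zero]
      _ ≤ 2 ^ s := Real.rpow_le_rpow_of_exponent_le one_le_two (by linarith)
  have hpq : (2:ℝ) ^ s = 2 * 2 ^ (s-1) := by
    rw [show s = (s-1) + 1 by ring]
    rw [Real.rpow_add two_pos, Real.rpow_one, show s - 1 + 1 - 1 = s - 1 by ring]
    ring
  have hC : (2:ℝ) ^ (2*s+1) = 2 * 2 ^ s * 2 ^ s := by
    rw [show 2*s+1 = s + (s + 1) by ring, Real.rpow_add two_pos, Real.rpow_add two_pos,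
      Real.rpow_one]
    ring
  have h1 : (a + R) ^ (-s) ≤ 2 ^ s * (a + |v|) ^ (-s) :=
    double_bound (by linarith) (by linarith) (by rw [hR]; linarith) (by linarith)
  have h3 : (b + R) ^ (1-s) ≤ 2 ^ (s-1) * (b + |v|) ^ (1-s) := by
    have := double_bound (x := b + R) (y := b + |v|) (t := s-1) (by linarith) (by linarith)
      (by rw [hR]; linarith) (by linarith)
    rwa [show -(s-1) = 1-s by ring] at this
  have h4 : a ^ (-s) ≤ a ^ (1-s) :=
    Real.rpow_le_rpow_of_exponent_le ha (by linarith)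
  have hXn : (0:ℝ) ≤ (a + |v|) ^ (-s) := Real.rpow_nonneg (by linarith) _
  have hYn : (0:ℝ) ≤ (b + |v|) ^ (1-s) := Real.rpow_nonneg (by linarith) _
  have hB1n : (0:ℝ) ≤ b ^ (1-s) := Real.rpow_nonneg hb0.le _
  have hAn : (0:ℝ) ≤ a ^ (1-s) := Real.rpow_nonneg ha0.le _
  have hB2n : (0:ℝ) ≤ (b + R) ^ (1-s) := Real.rpow_nonneg (by linarith) _
  have hasn : (0:ℝ) ≤ a ^ (-s) := Real.rpow_nonneg ha0.le _
  rw [show -s + 1 = 1 - s by ring]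
  calc ∫ u : ℝ, (a + |σ⁻¹ * u + v|) ^ (-s) * (b + |u|) ^ (-s)
      ≤ ∫ u : ℝ, ((a + R) ^ (-s) * (b + |u|) ^ (-s) +
          2 ^ s * a ^ (-s) * (b + R + |u|) ^ (-s)) := step1
    _ = (a + R) ^ (-s) * (2 * (b ^ (1-s) / (s-1))) +
        (2 ^ s * a ^ (-s)) * (2 * ((b + R) ^ (1-s) / (s-1))) := step2
    _ ≤ (2 * 2 ^ s * 2 ^ s) / (s-1) *
        ((a + |v|) ^ (-s) * b ^ (1-s) + a ^ (1-s) * (b + |v|) ^ (1-s)) :=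
      final_arith hs1 hp0 hp1 hpq h1 h3 h4 hXn hYn hB1n hAn hB2n hasn
    _ = 2 ^ (2*s+1) / (s-1) *
        ((a + |v|) ^ (-s) * b ^ (1-s) + a ^ (1-s) * (b + |v|) ^ (1-s)) := by
      rw [hC]
end

section
/- Let s > 1, a, b, σ ≥ 1 be real numbers and v ∈ ℝ. Then there is a constant C depending only on s such that ∫_ℝ (a + |u − v|)^(−s) (b + σ⁻¹|u|)^(−s) du ≤ C [ (a + σ⁻¹|v|)^(−s+1) b^(−s+1) + a^(−s+1) (b + σ⁻¹|v|)^(−s) ]. -/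
/-!
Since `|v| ≤ |u| + |u - v|`, at every `u` either `|u - v| ≥ |v| / 2`, where `a + |u - v|` is
comparable to `a + σ⁻¹ |v| + |u - v|` and the second factor is at most `b ^ (-s)`, or
`|u| ≥ |v| / 2`, where `b + σ⁻¹ |u|` is comparable to `b + σ⁻¹ |v|`. So the integrand is
bounded pointwise by two translates of weights `(c + |w|) ^ (-s)`, whose integral over `ℝ`
is `2 c ^ (1 - s) / (s - 1)`.
-/

open MeasureTheory Set Real

lemma integral_add_abs_rpow_neg {c s : ℝ} (hc : 0 < c) (hs : 1 < s) :
    ∫ w : ℝ, (c + |w|) ^ (-s) = 2 * c ^ (-s + 1) / (s - 1) := by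
  have hshift : ∫ x in Ioi (0 : ℝ), (c + x) ^ (-s) = ∫ t in Ioi c, t ^ (-s) := by
    have := (measurePreserving_add_left volume c).setIntegral_preimage_emb
      (measurableEmbedding_addLeft c) (fun t : ℝ => t ^ (-s)) (Ioi c)
    rwa [preimage_const_add_Ioi, sub_self] at this
  rw [integral_comp_abs (f := fun x => (c + x) ^ (-s)), hshift,
    integral_Ioi_rpow_of_lt (by linarith) hc, show -s + 1 = -(s - 1) by ring, div_neg]
  ring

lemma integrable_add_abs_rpow_neg {c s : ℝ} (hc : 0 < c) (hs : 1 < s) :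
    Integrable fun w : ℝ => (c + |w|) ^ (-s) :=
  .of_integral_ne_zero <| by
    rw [integral_add_abs_rpow_neg hc hs]
    have : 0 < s - 1 := by linarith
    positivity

lemma rpow_neg_le_of_le_mul {x y k t : ℝ} (hy : 0 < y) (hk : 0 < k) (h : y ≤ k * x)
    (ht : 0 ≤ t) : x ^ (-t) ≤ k ^ t * y ^ (-t) :=
  calc x ^ (-t) ≤ (y / k) ^ (-t) :=
        rpow_le_rpow_of_nonpos (by positivity) ((div_le_iff₀' hk).mpr h) (neg_nonpos.mpr ht)
    _ = k ^ t * y ^ (-t) := by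
        rw [div_rpow hy.le hk.le, rpow_neg hk.le, div_inv_eq_mul, mul_comm]

lemma rpow_neg_mul_rpow_neg_le {a b p s u v : ℝ} (ha : 0 < a) (hb : 0 < b) (hp₀ : 0 ≤ p)
    (hp₁ : p ≤ 1) (hs : 0 ≤ s) :
    (a + |u - v|) ^ (-s) * (b + p * |u|) ^ (-s) ≤
      3 ^ s * (b ^ (-s) * (a + p * |v| + |u - v|) ^ (-s) +
        (b + p * |v|) ^ (-s) * (a + |u - v|) ^ (-s)) := by
  have htri : |v| ≤ |u| + |u - v| := by
    simpa using abs_sub u (u - v)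
  have hf : 0 ≤ (a + |u - v|) ^ (-s) := by positivity
  have hg : 0 ≤ (b + p * |u|) ^ (-s) := by positivity
  have h3 : (0 : ℝ) ≤ 3 ^ s := by positivity
  rcases le_total |v| (2 * |u - v|) with hv | hv
  · have hf_le : (a + |u - v|) ^ (-s) ≤ 3 ^ s * (a + p * |v| + |u - v|) ^ (-s) :=
      rpow_neg_le_of_le_mul (by positivity) (by norm_num) (by nlinarith [abs_nonneg v]) hs
    have hg_le : (b + p * |u|) ^ (-s) ≤ b ^ (-s) :=
      rpow_le_rpow_of_nonpos hb (by nlinarith [abs_nonneg u]) (by linarith)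
    have : 0 ≤ (b + p * |v|) ^ (-s) * (a + |u - v|) ^ (-s) := by positivity
    calc _ ≤ 3 ^ s * (a + p * |v| + |u - v|) ^ (-s) * b ^ (-s) :=
          mul_le_mul hf_le hg_le hg (by positivity)
      _ ≤ _ := by nlinarith
  · have hg_le : (b + p * |u|) ^ (-s) ≤ 3 ^ s * (b + p * |v|) ^ (-s) :=
      rpow_neg_le_of_le_mul (by positivity) (by norm_num) (by nlinarith [abs_nonneg u]) hs
    have : 0 ≤ b ^ (-s) * (a + p * |v| + |u - v|) ^ (-s) := by positivity
    calc _ ≤ (a + |u - v|) ^ (-s) * (3 ^ s * (b + p * |v|) ^ (-s)) :=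
          mul_le_mul_of_nonneg_left hg_le hf
      _ ≤ _ := by nlinarith

theorem stmt_1 (s : ℝ) (hs : 1 < s) :
    ∃ C > 0, ∀ a b σ v : ℝ, 1 ≤ a → 1 ≤ b → 1 ≤ σ →
      ∫ u : ℝ, (a + |u - v|) ^ (-s) * (b + σ⁻¹ * |u|) ^ (-s) ≤
        C * ((a + σ⁻¹ * |v|) ^ (-s + 1) * b ^ (-s + 1) + a ^ (-s + 1) * (b + σ⁻¹ * |v|) ^ (-s)) := by
  have hs₁ : 0 < s - 1 := by linarith
  refine ⟨2 * 3 ^ s / (s - 1), by positivity, fun a b σ v ha hb hσ => ?_⟩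
  have ha₀ : 0 < a := by linarith
  have hc : 0 < a + σ⁻¹ * |v| := by positivity
  have hweight {c : ℝ} (hc : 0 < c) : Integrable fun u : ℝ => (c + |u - v|) ^ (-s) :=
    (integrable_add_abs_rpow_neg hc hs).comp_sub_right v
  have hintegral {c : ℝ} (hc : 0 < c) :
      ∫ u, (c + |u - v|) ^ (-s) = 2 * c ^ (-s + 1) / (s - 1) :=
    (integral_sub_right_eq_self (fun w => (c + |w|) ^ (-s)) v).trans
      (integral_add_abs_rpow_neg hc hs)
  calc ∫ u, (a + |u - v|) ^ (-s) * (b + σ⁻¹ * |u|) ^ (-s)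
      ≤ ∫ u, 3 ^ s * (b ^ (-s) * (a + σ⁻¹ * |v| + |u - v|) ^ (-s) +
          (b + σ⁻¹ * |v|) ^ (-s) * (a + |u - v|) ^ (-s)) :=
        integral_mono_of_nonneg (.of_forall fun u => by positivity)
          ((((hweight hc).const_mul _).add ((hweight ha₀).const_mul _)).const_mul _)
          (.of_forall fun u => rpow_neg_mul_rpow_neg_le ha₀ (by linarith) (by positivity)
            (inv_le_one_of_one_le₀ hσ) (by linarith))
    _ = 2 * 3 ^ s / (s - 1) * ((a + σ⁻¹ * |v|) ^ (-s + 1) * b ^ (-s) +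
          a ^ (-s + 1) * (b + σ⁻¹ * |v|) ^ (-s)) := by
        rw [integral_const_mul,
          integral_add ((hweight hc).const_mul _) ((hweight ha₀).const_mul _),
          integral_const_mul, integral_const_mul, hintegral hc, hintegral ha₀]
        ring
    _ ≤ _ := by
        gcongr
        linarith
end

section
/- Let w, z ∈ ℝ^{2d} with w in an open cone Γ' and z in the complement of an open cone Γ, where the cones satisfy: the closure of Γ' ∩ S^{2d−1} is contained in Γ ∩ S^{2d−1}. Then there exist constants c, C > 0 depending only on Γ, Γ' such that c · max(1 + |w|, 1 + |z|) ≤ 1 + |w − z| ≤ C · max(1 + |w|, 1 + |z|). -/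
open Metric

theorem stmt_15 (d : ℕ) (Γ Γ' : Set (EuclideanSpace ℝ (Fin (2 * d))))
    (hΓopen : IsOpen Γ) (hΓ'open : IsOpen Γ')
    (hΓcone : ∀ x ∈ Γ, ∀ lam : ℝ, 0 < lam → lam • x ∈ Γ)
    (hΓ'cone : ∀ x ∈ Γ', ∀ lam : ℝ, 0 < lam → lam • x ∈ Γ')
    (hsep : closure (Γ' ∩ Metric.sphere 0 1) ⊆ Γ ∩ Metric.sphere 0 1) :
    ∃ c > 0, ∃ C > 0, ∀ w ∈ Γ', ∀ z ∈ Γᶜ,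
      c * max (1 + ‖w‖) (1 + ‖z‖) ≤ 1 + ‖w - z‖ ∧
        1 + ‖w - z‖ ≤ C * max (1 + ‖w‖) (1 + ‖z‖) := by
  -- upper bound is always with C = 2
  have upper : ∀ (w z : EuclideanSpace ℝ (Fin (2 * d))),
      1 + ‖w - z‖ ≤ 2 * max (1 + ‖w‖) (1 + ‖z‖) := by
    intro w z
    have h1 : ‖w - z‖ ≤ ‖w‖ + ‖z‖ := norm_sub_le w z
    have h2 : (1:ℝ) + ‖w‖ ≤ max (1 + ‖w‖) (1 + ‖z‖) := le_max_left _ _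
    have h3 : (1:ℝ) + ‖z‖ ≤ max (1 + ‖w‖) (1 + ‖z‖) := le_max_right _ _
    nlinarith [norm_nonneg w, norm_nonneg z]
  by_cases hzc : Γᶜ = ∅
  · exact ⟨1, one_pos, 2, two_pos, fun w _ z hz => absurd (hzc ▸ hz) (Set.notMem_empty z)⟩
  by_cases hK : (Γ' ∩ Metric.sphere 0 1).Nonempty
  · -- main case
    have hzc' : Γᶜ.Nonempty := Set.nonempty_iff_ne_empty.2 hzc
    set K := closure (Γ' ∩ Metric.sphere 0 1) with hKdef
    have hKcompact : IsCompact K := by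
      apply Metric.isCompact_of_isClosed_isBounded isClosed_closure
      apply Bornology.IsBounded.closure
      exact (Metric.isBounded_sphere (x := (0:EuclideanSpace ℝ (Fin (2*d)))) (r := 1)).subset
        Set.inter_subset_right
    have hKne : K.Nonempty := hK.closure
    obtain ⟨x₀, hx₀K, hx₀min⟩ := hKcompact.exists_isMinOn hKne
      (continuous_infDist_pt Γᶜ).continuousOn
    have hεpos : 0 < infDist x₀ Γᶜ := by
      have hx₀Γ : x₀ ∈ Γ := (hsep hx₀K).1
      exact (hΓopen.isClosed_compl.notMem_iff_infDist_pos hzc' (x := x₀)).1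
        (by simpa using hx₀Γ)
    set ε := infDist x₀ Γᶜ with hεdef
    refine ⟨ε / (1 + ε), by positivity, 2, two_pos, fun w hw z hz => ?_⟩
    refine ⟨?_, upper w z⟩
    have hεle1 : ε / (1 + ε) ≤ 1 := by
      rw [div_le_one (by linarith)]; linarith
    by_cases hw0 : w = 0
    · subst hw0
      simp only [norm_zero, zero_sub, norm_neg]
      have : max (1 + (0:ℝ)) (1 + ‖z‖) = 1 + ‖z‖ := by
        apply max_eq_right; linarith [norm_nonneg z]
      rw [this]
      nlinarith [norm_nonneg z, hεpos]
    · -- key lower bound: ‖w - z‖ ≥ ε * ‖w‖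
      have hwn : 0 < ‖w‖ := norm_pos_iff.2 hw0
      set u := ‖w‖⁻¹ • w with hu
      set v := ‖w‖⁻¹ • z with hv
      have huK : u ∈ K := by
        apply subset_closure
        constructor
        · exact hΓ'cone w hw _ (inv_pos.2 hwn)
        · simp [hu, mem_sphere_iff_norm, norm_smul, abs_of_pos (inv_pos.2 hwn),
            inv_mul_cancel₀ hwn.ne']
      have hvc : v ∈ Γᶜ := by
        intro hvΓ
        apply hz
        have := hΓcone v hvΓ ‖w‖ hwn
        rwa [hv, smul_smul, mul_inv_cancel₀ hwn.ne', one_smul] at this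
      have hdist : ε ≤ dist u v := le_trans (hx₀min huK) (infDist_le_dist_of_mem hvc)
      have hkey : ε * ‖w‖ ≤ ‖w - z‖ := by
        have huv : dist u v = ‖w‖⁻¹ * ‖w - z‖ := by
          rw [dist_eq_norm, hu, hv, ← smul_sub, norm_smul, Real.norm_eq_abs,
            abs_of_pos (inv_pos.2 hwn)]
        rw [huv] at hdist
        calc ε * ‖w‖ ≤ (‖w‖⁻¹ * ‖w - z‖) * ‖w‖ := by nlinarith
          _ = ‖w - z‖ := by field_simp
      -- also ‖z‖ ≤ (1+ε)/ε * ‖w - z‖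
      have hz2 : ε * ‖z‖ ≤ (1 + ε) * ‖w - z‖ := by
        have : ‖z‖ ≤ ‖w‖ + ‖w - z‖ := by
          calc ‖z‖ = ‖w - (w - z)‖ := by rw [sub_sub_cancel]
            _ ≤ ‖w‖ + ‖w - z‖ := norm_sub_le _ _
        nlinarith
      rcases max_cases (1 + ‖w‖) (1 + ‖z‖) with ⟨hm, _⟩ | ⟨hm, _⟩ <;> rw [hm] <;>
        rw [div_mul_eq_mul_div, div_le_iff₀ (by linarith)] <;>
        nlinarith [hkey, hz2, hεpos, norm_nonneg (w - z),
          mul_nonneg hεpos.le (norm_nonneg (w - z))]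
  · -- Γ' ∩ sphere empty: every w ∈ Γ' is 0
    refine ⟨1, one_pos, 2, two_pos, fun w hw z hz => ?_⟩
    have hw0 : w = 0 := by
      by_contra hw0
      have hwn : 0 < ‖w‖ := norm_pos_iff.2 hw0
      apply hK
      refine ⟨‖w‖⁻¹ • w, hΓ'cone w hw _ (inv_pos.2 hwn), ?_⟩
      simp [mem_sphere_iff_norm, norm_smul, abs_of_pos (inv_pos.2 hwn),
        inv_mul_cancel₀ hwn.ne']
    subst hw0
    refine ⟨?_, upper 0 z⟩
    simp only [norm_zero, zero_sub, norm_neg, one_mul]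
    have : max (1 + (0:ℝ)) (1 + ‖z‖) = 1 + ‖z‖ := by
      apply max_eq_right; linarith [norm_nonneg z]
    rw [this]
end
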